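/- arXiv:0804.3638 — 2 statements merged into one kernel-verified Lean document; each statement's English description precedes it below -/
import Mathlib

section
/- For every positive integer n, the sum over all binary trees T with n vertices of the product, over all vertices v of T, of 1/(h_v · 2^{h_v - 1}) equals 1/n!, where h_v denotes the hook length of v in T. -/
/-- The product over all vertices `v` of a binary tree of `f h_v`, where `h_v` is the
hook length of `v`, i.e. the number of vertices of the subtree rooted at `v`. -/
def hookProd (f : ℕ → ℚ) : Tree Unit → ℚ
  | BinaryTree.nil => 1
  | BinaryTree.node _ l r =>
      f (l.numNodes + r.numNodes + 1) * hookProd f l * hookProd f r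

/-!
Write `S f n` for the sum of `hookProd f` over the binary trees with `n` vertices. Splitting a
tree at its root gives `S f (n + 1) = f (n + 1) * ∑_{i + j = n} S f i * S f j`. For
`f h = 1 / (h * 2 ^ (h - 1))`, the values `S f i = 1 / i!` solve this recursion, because
`∑_{i + j = n} 1 / (i! * j!) = 2 ^ n / n!` is the binomial theorem for `(1 + 1) ^ n`.
-/

open Finset BinaryTree
open Finset.HasAntidiagonal.antidiagonal (fst_le snd_le)
open scoped Nat

theorem Nat.sum_antidiagonal_inv_factorial_mul {K : Type*} [Field K] [CharZero K] (n : ℕ) :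
    ∑ ij ∈ antidiagonal n, (1 / (ij.1 ! : K)) * (1 / (ij.2 ! : K)) = 2 ^ n / (n ! : K) := by
  have two_pow : (2 : K) ^ n = ∑ ij ∈ antidiagonal n, (n.choose ij.1 : K) := by
    simpa [one_add_one_eq_two] using (Commute.one_left (1 : K)).add_pow' n
  rw [two_pow, sum_div]
  refine sum_congr rfl fun ij hij => ?_
  obtain rfl : ij.1 + ij.2 = n := mem_antidiagonal.mp hij
  have := (ij.1 + ij.2).factorial_ne_zero
  rw [Nat.cast_add_choose]
  field_simp

namespace BinaryTree

theorem sum_pairwiseNode {M : Type*} [AddCommMonoid M] (a b : Finset (BinaryTree Unit))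
    (g : BinaryTree Unit → M) :
    ∑ T ∈ pairwiseNode a b, g T = ∑ l ∈ a, ∑ r ∈ b, g (l △ r) := by
  rw [sum_map, sum_product]
  rfl

theorem pairwiseDisjoint_pairwiseNode_treesOfNumNodesEq (n : ℕ) :
    (antidiagonal n : Set (ℕ × ℕ)).PairwiseDisjoint fun ij =>
      pairwiseNode (treesOfNumNodesEq ij.1) (treesOfNumNodesEq ij.2) := by
  simp_rw [Set.PairwiseDisjoint, Set.Pairwise, disjoint_left]
  aesop

theorem sum_treesOfNumNodesEq_succ {M : Type*} [AddCommMonoid M] (g : BinaryTree Unit → M)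
    (n : ℕ) :
    ∑ T ∈ treesOfNumNodesEq (n + 1), g T =
      ∑ ij ∈ antidiagonal n,
        ∑ l ∈ treesOfNumNodesEq ij.1, ∑ r ∈ treesOfNumNodesEq ij.2, g (l △ r) := by
  rw [treesOfNumNodesEq_succ, sum_biUnion (pairwiseDisjoint_pairwiseNode_treesOfNumNodesEq n)]
  simp only [sum_pairwiseNode]

end BinaryTree

theorem sum_hookProd_treesOfNumNodesEq_succ (f : ℕ → ℚ) (n : ℕ) :
    ∑ T ∈ treesOfNumNodesEq (n + 1), hookProd f T =
      f (n + 1) * ∑ ij ∈ antidiagonal n,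
        (∑ T ∈ treesOfNumNodesEq ij.1, hookProd f T) *
          ∑ T ∈ treesOfNumNodesEq ij.2, hookProd f T := by
  rw [sum_treesOfNumNodesEq_succ, mul_sum]
  refine sum_congr rfl fun ij hij => ?_
  rw [sum_mul_sum, mul_sum]
  refine sum_congr rfl fun l hl => ?_
  rw [mul_sum]
  refine sum_congr rfl fun r hr => ?_
  rw [mem_treesOfNumNodesEq] at hl hr
  rw [hookProd, hl, hr, mem_antidiagonal.mp hij, mul_assoc]

theorem han_formula_one_general (n : ℕ) :
    ∑ T ∈ Tree.treesOfNumNodesEq n,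
      hookProd (fun h => 1 / ((h : ℚ) * 2 ^ (h - 1))) T = 1 / (n.factorial : ℚ) := by
  induction n using Nat.strong_induction_on with
  | _ n ih =>
    cases n with
    | zero => simp [hookProd]
    | succ n =>
      have sum_children : ∀ ij ∈ antidiagonal n,
          (∑ T ∈ treesOfNumNodesEq ij.1, hookProd (fun h => 1 / ((h : ℚ) * 2 ^ (h - 1))) T) *
            ∑ T ∈ treesOfNumNodesEq ij.2, hookProd (fun h => 1 / ((h : ℚ) * 2 ^ (h - 1))) T =
          (1 / (ij.1 ! : ℚ)) * (1 / (ij.2 ! : ℚ)) := fun ij hij => by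
        rw [ih _ (Nat.lt_succ_of_le (fst_le hij)),
          ih _ (Nat.lt_succ_of_le (snd_le hij))]
      rw [sum_hookProd_treesOfNumNodesEq_succ, sum_congr rfl sum_children,
        Nat.sum_antidiagonal_inv_factorial_mul, Nat.factorial_succ]
      push_cast
      field_simp

theorem han_formula_one (n : ℕ) (hn : 0 < n) :
    ∑ T ∈ Tree.treesOfNumNodesEq n,
      hookProd (fun h => 1 / ((h : ℚ) * 2 ^ (h - 1))) T = 1 / (n.factorial : ℚ) :=
  han_formula_one_general n
end

section
/- If a function P from the nonnegative integers to the rationals satisfies P(0) = 1 and, for every positive integer n, P(n) = (1/(n · 2^{n-1})) · Σ_{k=0}^{n-1} P(k) · P(n-1-k), then P(n) = 1/n! for all n ≥ 0. -/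
open Finset Nat

theorem sum_range_inv_factorial_mul_inv_factorial {K : Type*} [Field K] [CharZero K] (m : ℕ) :
    ∑ k ∈ range (m + 1), (1 / (k ! : K)) * (1 / ((m - k)! : K)) = 2 ^ m / (m ! : K) := by
  have hterm : ∀ k ∈ range (m + 1),
      (1 / (k ! : K)) * (1 / ((m - k)! : K)) = (m.choose k : K) / m ! := by
    intro k hk
    have : (m ! : K) ≠ 0 := cast_ne_zero.mpr m.factorial_ne_zero
    rw [cast_choose K (mem_range_succ_iff.mp hk)]
    field_simp
  rw [sum_congr rfl hterm, ← sum_div, ← cast_sum, sum_range_choose, cast_pow, cast_ofNat]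

theorem P_solution (P : ℕ → ℚ) (h0 : P 0 = 1)
    (hrec : ∀ n : ℕ, 0 < n →
      P n = (1 / ((n : ℚ) * 2 ^ (n - 1))) *
        ∑ k ∈ Finset.range n, P k * P (n - 1 - k)) :
    ∀ n : ℕ, P n = 1 / (n.factorial : ℚ) := by
  intro n
  induction n using Nat.strong_induction_on with
  | _ n ih =>
    rcases n with _ | m
    · simpa using h0
    have hsum : ∑ k ∈ range (m + 1), P k * P (m - k)
        = ∑ k ∈ range (m + 1), (1 / (k ! : ℚ)) * (1 / ((m - k)! : ℚ)) :=
      sum_congr rfl fun k hk => by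
        have hkm := mem_range.mp hk
        rw [ih k (by omega), ih (m - k) (by omega)]
    rw [hrec (m + 1) m.succ_pos, add_tsub_cancel_right, hsum,
      sum_range_inv_factorial_mul_inv_factorial, factorial_succ]
    push_cast
    field_simp
end
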